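/- Let Q₀, P₀ be orthogonal projections on a Hilbert space with P₀ ≤ Q₀ + F for an orthogonal projection F satisfying Ṽ F = F, where Ṽ is unitary with ‖Ṽ Q₀ − Q₀‖ ≤ η and Ṽ Q₀ = Q₀ Ṽ. Then ‖Ṽ P₀ − P₀‖ ≤ η. -/

import Mathlib

/-!
Since `Q₀ F = F Q₀ = 0`, the operator `Q₀ + F` is an idempotent whose range contains
`ran Q₀ ⊔ ran F ⊇ ran P₀`, so `(Q₀ + F) P₀ = P₀`. As `Ṽ` fixes `F`, this gives
`Ṽ P₀ − P₀ = (Ṽ Q₀ − Q₀) P₀`, and an orthogonal projection has norm at most one.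
-/

open LinearMap in
theorem Module.End.add_mul_eq_self_of_range_le_sup {R M : Type*} [Semiring R] [AddCommMonoid M]
    [Module R M] {q f p : Module.End R M} (hq : IsIdempotentElem q) (hf : IsIdempotentElem f)
    (hqf : q * f = 0) (hfq : f * q = 0) (hp : range p ≤ range q ⊔ range f) :
    (q + f) * p = p := by
  have hqf_idem : IsIdempotentElem (q + f) := hq.add hf (by rw [hqf, hfq, add_zero])
  have hq_eq : q = (q + f) * q := by rw [add_mul, hq.eq, hfq, add_zero]
  have hf_eq : f = (q + f) * f := by rw [add_mul, hf.eq, hqf, zero_add]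
  refine (hqf_idem.comp_eq_right_iff p).mpr (hp.trans (sup_le ?_ ?_))
  · nth_rw 1 [hq_eq]; exact range_comp_le_range _ _
  · nth_rw 1 [hf_eq]; exact range_comp_le_range _ _

theorem mul_sub_self_eq_of_add_mul_eq {R : Type*} [Ring R] {q f p v : R}
    (hp : (q + f) * p = p) (hf : v * f = f) :
    v * p - p = (v * q - q) * p :=
  calc v * p - p = v * ((q + f) * p) - (q + f) * p := by rw [hp]
    _ = (v * q - q) * p + (v * f - f) * p := by noncomm_ring
    _ = (v * q - q) * p := by rw [hf, sub_self, zero_mul, add_zero]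

theorem stmt_14_general {H : Type*} [NormedAddCommGroup H] [InnerProductSpace ℂ H]
    [CompleteSpace H]
    (P₀ Q₀ F Vt : H →L[ℂ] H)
    (hP₀ : IsIdempotentElem P₀) (hP₀sa : IsSelfAdjoint P₀)
    (hQ₀ : IsIdempotentElem Q₀) (hQ₀sa : IsSelfAdjoint Q₀)
    (hF : IsIdempotentElem F) (hFsa : IsSelfAdjoint F)
    (hQF : Q₀ * F = 0)
    (hle : LinearMap.range (P₀ : H →ₗ[ℂ] H) ≤ LinearMap.range (Q₀ : H →ₗ[ℂ] H) ⊔ LinearMap.range (F : H →ₗ[ℂ] H))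
    (hVF : Vt * F = F)
    (η : ℝ)
    (hVQ : ‖Vt * Q₀ - Q₀‖ ≤ η) :
    ‖Vt * P₀ - P₀‖ ≤ η := by
  have hFQ : F * Q₀ = 0 := by
    simpa [hQ₀sa.star_eq, hFsa.star_eq] using congrArg star hQF
  have hP₀_range : (Q₀ + F) * P₀ = P₀ := by
    apply ContinuousLinearMap.coe_injective
    rw [ContinuousLinearMap.toLinearMap_mul, ContinuousLinearMap.toLinearMap_add]
    exact Module.End.add_mul_eq_self_of_range_le_sup
      (ContinuousLinearMap.IsIdempotentElem.toLinearMap hQ₀)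
      (ContinuousLinearMap.IsIdempotentElem.toLinearMap hF)
      (by rw [← ContinuousLinearMap.toLinearMap_mul, hQF, ContinuousLinearMap.toLinearMap_zero])
      (by rw [← ContinuousLinearMap.toLinearMap_mul, hFQ, ContinuousLinearMap.toLinearMap_zero]) hle
  calc ‖Vt * P₀ - P₀‖ = ‖(Vt * Q₀ - Q₀) * P₀‖ := by
        rw [mul_sub_self_eq_of_add_mul_eq hP₀_range hVF]
    _ ≤ ‖Vt * Q₀ - Q₀‖ * ‖P₀‖ := norm_mul_le _ _
    _ ≤ ‖Vt * Q₀ - Q₀‖ :=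
        mul_le_of_le_one_right (norm_nonneg _) (IsStarProjection.norm_le P₀ ⟨hP₀, hP₀sa⟩)
    _ ≤ η := hVQ

/-- Transfer estimate from the proof of Lemma 1.2: if `P₀ ≤ Q₀ + F` with `F ⊥ Q₀`,
`Ṽ F = F`, `Ṽ Q₀ = Q₀ Ṽ` and `‖Ṽ Q₀ − Q₀‖ ≤ η`, then `‖Ṽ P₀ − P₀‖ ≤ η`. -/
theorem stmt_14 {H : Type*} [NormedAddCommGroup H] [InnerProductSpace ℂ H]
    [CompleteSpace H]
    (P₀ Q₀ F Vt : H →L[ℂ] H)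
    (hP₀ : IsIdempotentElem P₀) (hP₀sa : IsSelfAdjoint P₀)
    (hQ₀ : IsIdempotentElem Q₀) (hQ₀sa : IsSelfAdjoint Q₀)
    (hF : IsIdempotentElem F) (hFsa : IsSelfAdjoint F)
    (hQF : Q₀ * F = 0)
    (hle : LinearMap.range (P₀ : H →ₗ[ℂ] H) ≤ LinearMap.range (Q₀ : H →ₗ[ℂ] H) ⊔ LinearMap.range (F : H →ₗ[ℂ] H))
    (hVt : Vt ∈ unitary (H →L[ℂ] H))
    (hVF : Vt * F = F)
    (hVQc : Vt * Q₀ = Q₀ * Vt)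
    (η : ℝ) (hη : 0 < η)
    (hVQ : ‖Vt * Q₀ - Q₀‖ ≤ η) :
    ‖Vt * P₀ - P₀‖ ≤ η :=
  stmt_14_general P₀ Q₀ F Vt hP₀ hP₀sa hQ₀ hQ₀sa hF hFsa hQF hle hVF η hVQ
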